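/- For positive integers n, k and a partition λ inside an n×k rectangle, and p ∈ {0,1}, set a_i = λ_i + n - i + p/2. Then the determinant det[ qbinom(2(k+i)+p, k+i-j-λ_{n-j})_q ]_{i,j=0}^{n-1} of q-binomial coefficients equals q^{‖λ̄‖} · (∏_{i=1}^{n} [2k+2n-2i+p]_q!) · (∏_{1≤i<j≤n} [a_i - a_j]_q [a_i + a_j]_q) / (∏_{i=1}^{n} [k+n-1-a_i+p/2]_q! · [k+n-1+a_i+p/2]_q!). -/
import Mathlib


open Finset

noncomputable section

/-- The generic variable `q`, as a rational function over `ℚ`. -/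
def q : RatFunc ℚ := RatFunc.X

/-- The `q`-integer `[m]_q`. -/
def qint (m : ℕ) : RatFunc ℚ := ∑ i ∈ Finset.range m, q ^ i

/-- The `q`-factorial `[m]_q!`. -/
def qfact (m : ℕ) : RatFunc ℚ := ∏ i ∈ Finset.range m, qint (i + 1)

/-- The Gaussian binomial coefficient, `0` outside the valid range. -/
def qbinom (a b : ℕ) : RatFunc ℚ :=
  if b ≤ a then qfact a / (qfact b * qfact (a - b)) else 0

/-- Gaussian binomial with an integer lower argument (`0` when negative). -/
def qbinomZ (a : ℕ) (c : ℤ) : RatFunc ℚ := if 0 ≤ c then qbinom a c.toNat else 0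

namespace Stmt4Aux

open Polynomial

lemma q_ne_zero : q ≠ 0 := by
  simp [q, RatFunc.X_ne_zero]

lemma qint_mul (m : ℕ) : qint m * (q - 1) = q ^ m - 1 := geom_sum_mul q m

lemma qpow_sub_one_ne_zero {m : ℕ} (hm : 0 < m) : q ^ m - 1 ≠ 0 := by
  have h1 : (q : RatFunc ℚ) ^ m - 1 = algebraMap ℚ[X] (RatFunc ℚ) (X ^ m - C 1) := by
    simp [q, RatFunc.algebraMap_X, map_sub, map_pow]
  rw [h1, map_ne_zero_iff _ (IsFractionRing.injective ℚ[X] (RatFunc ℚ))]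
  exact Polynomial.X_pow_sub_C_ne_zero hm 1

lemma q_sub_one_ne_zero : q - 1 ≠ 0 := by
  have := qpow_sub_one_ne_zero (m := 1) one_pos
  simpa using this

lemma qint_ne_zero {m : ℕ} (hm : 0 < m) : qint m ≠ 0 := by
  intro h
  exact qpow_sub_one_ne_zero hm (by rw [← qint_mul, h, zero_mul])

lemma qfact_ne_zero (m : ℕ) : qfact m ≠ 0 :=
  Finset.prod_ne_zero_iff.mpr fun i _ => qint_ne_zero (Nat.succ_pos i)

/-- q-integer with integer argument. -/
def qintZ (t : ℤ) : RatFunc ℚ := (q ^ t - 1) / (q - 1)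

lemma qintZ_natCast (m : ℕ) : qintZ (m : ℤ) = qint m := by
  rw [qintZ, zpow_natCast, ← qint_mul, mul_div_assoc, div_self q_sub_one_ne_zero, mul_one]

/-- reciprocal factorial, 0 for negative arguments -/
def F (t : ℤ) : RatFunc ℚ := if 0 ≤ t then (qfact t.toNat)⁻¹ else 0

lemma F_natCast (m : ℕ) : F (m : ℤ) = (qfact m)⁻¹ := by simp [F]

lemma qfact_succ (m : ℕ) : qfact (m + 1) = qfact m * qint (m + 1) := Finset.prod_range_succ _ _

lemma F_pred (t : ℤ) : F (t - 1) = F t * qintZ t := by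
  rcases le_or_gt 1 t with h | h
  · obtain ⟨m, rfl⟩ : ∃ m : ℕ, t = (m : ℤ) + 1 := ⟨(t - 1).toNat, by omega⟩
    rw [show ((m : ℤ) + 1 - 1) = (m : ℤ) by ring, F_natCast,
      show ((m : ℤ) + 1) = ((m + 1 : ℕ) : ℤ) by push_cast; ring, F_natCast, qintZ_natCast,
      qfact_succ, mul_inv, mul_assoc, inv_mul_cancel₀ (qint_ne_zero (Nat.succ_pos m)), mul_one]
  · rcases eq_or_lt_of_le (by omega : t ≤ 0) with h0 | h0
    · rw [h0]
      simp [F, qintZ]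
    · rw [show F (t-1) = 0 by simp [F]; omega, show F t = 0 by simp [F]; omega, zero_mul]

lemma F_eq (t : ℤ) (N : ℕ) : F t = F (t + N) * ∏ d ∈ Finset.range N, qintZ (t + 1 + d) := by
  induction N with
  | zero => simp
  | succ N ih =>
    have h := F_pred (t + N + 1)
    rw [show (t + (N:ℤ) + 1 - 1) = t + N by ring] at h
    rw [Finset.prod_range_succ, ih, h]
    push_cast
    ring

lemma qbinomZ_eq (c m pp : ℕ) :
    qbinomZ (2 * c + pp) ((c : ℤ) - m) = qfact (2 * c + pp) * (F ((c:ℤ) - m) * F ((c:ℤ) + m + pp)) := by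
  rcases le_or_gt m c with h | h
  · have h0 : (0:ℤ) ≤ (c:ℤ) - m := by omega
    have h1 : ((c:ℤ) - m).toNat = c - m := by omega
    rw [qbinomZ, if_pos h0, h1, qbinom, if_pos (by omega),
      show (2 * c + pp - (c - m)) = c + m + pp by omega,
      show ((c:ℤ) - m) = ((c - m : ℕ) : ℤ) by omega,
      show ((c:ℤ) + m + pp) = ((c + m + pp : ℕ) : ℤ) by push_cast; ring,
      F_natCast, F_natCast]
    field_simp
  · have h0 : ¬ (0:ℤ) ≤ (c:ℤ) - m := by omega
    rw [qbinomZ, if_neg h0, show F ((c:ℤ) - m) = 0 by simp [F]; omega]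
    ring

def zv (M pp : ℕ) : RatFunc ℚ := q ^ (M : ℤ) + q ^ (-(M:ℤ) - pp)
def wv (a : ℤ) (pp : ℕ) : RatFunc ℚ := q ^ a + q ^ (-a - pp)

lemma pair_iden (a : ℤ) (M pp : ℕ) :
    qintZ (a - M) * qintZ (a + M + pp) =
      -(q ^ (a + pp) * ((q - 1)⁻¹) ^ 2) * (zv M pp - wv a pp) := by
  have hq := q_ne_zero
  have h1 := q_sub_one_ne_zero
  have hA : q ^ a ≠ 0 := zpow_ne_zero _ hq
  have hM : q ^ (M:ℤ) ≠ 0 := zpow_ne_zero _ hq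
  have hP : q ^ (pp:ℤ) ≠ 0 := zpow_ne_zero _ hq
  have main : (q ^ (a - (M:ℤ)) - 1) * (q ^ (a + M + pp) - 1)
      = -(q ^ (a + (pp:ℤ))) * (zv M pp - wv a pp) := by
    rw [zv, wv]
    simp only [sub_eq_add_neg, neg_add, zpow_add₀ hq, zpow_neg]
    field_simp
    ring
  rw [qintZ, qintZ, div_mul_div_comm, main]
  rw [show ((q-1) * (q-1)) = (q-1)^2 by ring, div_eq_mul_inv, ← inv_pow]
  ring

lemma z_diff (mi mj pp : ℕ) (h : mi ≤ mj) :
    zv mi pp - zv mj pp =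
      -((q - 1) ^ 2 * q ^ (-(mj:ℤ) - pp) * (qint (mj - mi) * qint (mi + mj + pp))) := by
  have hq := q_ne_zero
  have p1 : (q : RatFunc ℚ) ^ (mj - mi) = q ^ ((mj:ℤ) - mi) := by
    rw [← zpow_natCast, show ((mj - mi : ℕ) : ℤ) = (mj:ℤ) - mi by omega]
  have p2 : (q : RatFunc ℚ) ^ (mi + mj + pp) = q ^ ((mi:ℤ) + mj + pp) := by
    rw [← zpow_natCast]; push_cast; ring_nf
  have key : (q ^ ((mj:ℤ) - mi) - 1) * (q ^ ((mi:ℤ) + mj + pp) - 1) * q ^ (-(mj:ℤ) - pp)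
      = -(zv mi pp - zv mj pp) := by
    have hA : q ^ (mi:ℤ) ≠ 0 := zpow_ne_zero _ hq
    have hM : q ^ (mj:ℤ) ≠ 0 := zpow_ne_zero _ hq
    have hP : q ^ (pp:ℤ) ≠ 0 := zpow_ne_zero _ hq
    rw [zv, zv]
    simp only [sub_eq_add_neg, neg_add, zpow_add₀ hq, zpow_neg]
    field_simp
    ring
  have e1 := qint_mul (mj - mi)
  have e2 := qint_mul (mi + mj + pp)
  rw [p1] at e1
  rw [p2] at e2
  calc zv mi pp - zv mj pp
      = -((q ^ ((mj:ℤ) - mi) - 1) * (q ^ ((mi:ℤ) + mj + pp) - 1) * q ^ (-(mj:ℤ) - pp)) := by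
        rw [key]; ring
    _ = -((q - 1) ^ 2 * q ^ (-(mj:ℤ) - pp) * (qint (mj - mi) * qint (mi + mj + pp))) := by
        rw [← e1, ← e2]; ring

section VdM

variable {R : Type*} [CommRing R] [Nontrivial R]

lemma prod_Ioi_rev {n : ℕ} {M : Type*} [CommMonoid M] (f : Fin n → Fin n → M) :
    (∏ i : Fin n, ∏ j ∈ Finset.Ioi i, f j.rev i.rev) = ∏ i : Fin n, ∏ j ∈ Finset.Ioi i, f i j := by
  rw [Finset.prod_sigma', Finset.prod_sigma']
  refine Finset.prod_nbij' (fun x => ⟨x.2.rev, x.1.rev⟩) (fun x => ⟨x.2.rev, x.1.rev⟩) ?_ ?_ ?_ ?_ ?_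
  · rintro ⟨a, b⟩ hab
    simp only [Finset.mem_sigma, Finset.mem_univ, Finset.mem_Ioi, true_and] at hab ⊢
    exact (Fin.rev_lt_rev).mpr hab
  · rintro ⟨a, b⟩ hab
    simp only [Finset.mem_sigma, Finset.mem_univ, Finset.mem_Ioi, true_and] at hab ⊢
    exact (Fin.rev_lt_rev).mpr hab
  · rintro ⟨a, b⟩ _; simp [Fin.rev_rev]
  · rintro ⟨a, b⟩ _; simp [Fin.rev_rev]
  · rintro ⟨a, b⟩ _; simp

lemma sum_sum_Ioi {n : ℕ} {M : Type*} [AddCommMonoid M] (f : Fin n → Fin n → M) :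
    (∑ i : Fin n, ∑ j ∈ Finset.Ioi i, f i j) = ∑ j : Fin n, ∑ i ∈ Finset.Iio j, f i j := by
  rw [Finset.sum_sigma', Finset.sum_sigma']
  refine Finset.sum_nbij' (fun x => ⟨x.2, x.1⟩) (fun x => ⟨x.2, x.1⟩) ?_ ?_ ?_ ?_ ?_
  · rintro ⟨a, b⟩ hab
    simp only [Finset.mem_sigma, Finset.mem_univ, Finset.mem_Ioi, Finset.mem_Iio, true_and] at hab ⊢
    exact hab
  · rintro ⟨a, b⟩ hab
    simp only [Finset.mem_sigma, Finset.mem_univ, Finset.mem_Ioi, Finset.mem_Iio, true_and] at hab ⊢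
    exact hab
  · rintro ⟨a, b⟩ _; rfl
  · rintro ⟨a, b⟩ _; rfl
  · rintro ⟨a, b⟩ _; rfl

lemma det_prod_linear {n : ℕ} (c : Fin n → ℕ → R) (z : Fin n → R) :
    Matrix.det (Matrix.of fun i j : Fin n =>
        Polynomial.eval (z j) (∏ d ∈ Finset.range (n - 1 - (i:ℕ)), (X - C (c i d))))
      = ∏ i : Fin n, ∏ j ∈ Finset.Ioi i, (z i - z j) := by
  have hmonic : ∀ i : Fin n, (∏ d ∈ Finset.range (n - 1 - (i:ℕ)), (X - C (c i d))).Monic :=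
    fun i => monic_prod_of_monic _ _ fun d _ => monic_X_sub_C _
  have hdeg : ∀ j : Fin n,
      (∏ d ∈ Finset.range (n - 1 - ((Fin.rev j):ℕ)), (X - C (c (Fin.rev j) d))).natDegree = (j:ℕ) := by
    intro j
    rw [Polynomial.natDegree_prod_of_monic _ _ (fun d _ => monic_X_sub_C _)]
    simp only [natDegree_X_sub_C, Finset.sum_const, Finset.card_range, smul_eq_mul, mul_one]
    rw [Fin.val_rev]
    omega
  have key := Matrix.det_eval_matrixOfPolynomials_eq_det_vandermonde
    (v := fun i : Fin n => z (Fin.rev i))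
    (p := fun j => ∏ d ∈ Finset.range (n - 1 - ((Fin.rev j):ℕ)), (X - C (c (Fin.rev j) d)))
    hdeg (fun j => hmonic _)
  have h2 : (Matrix.of fun i j : Fin n =>
        Polynomial.eval (z j) (∏ d ∈ Finset.range (n - 1 - (i:ℕ)), (X - C (c i d))))
      = Matrix.transpose ((Matrix.of fun i j : Fin n =>
          Polynomial.eval (z (Fin.rev i))
            (∏ d ∈ Finset.range (n - 1 - ((Fin.rev j):ℕ)), (X - C (c (Fin.rev j) d)))).submatrix
          Fin.revPerm Fin.revPerm) := by
    ext i j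
    simp only [Matrix.transpose_apply, Matrix.submatrix_apply, Matrix.of_apply,
      Fin.revPerm_apply, Fin.rev_rev]
  rw [h2, Matrix.det_transpose, Matrix.det_submatrix_equiv_self, ← key,
    Matrix.det_vandermonde]
  exact (prod_Ioi_rev (fun i j => z i - z j)).symm ▸ (prod_Ioi_rev (fun i j => z i - z j))

end VdM

lemma entry_lemma (c M pp R : ℕ) :
    qbinomZ (2*c + pp) ((c:ℤ) - M) =
      (qfact (2*c+pp) * ∏ d ∈ Finset.range R, (-(q ^ ((c:ℤ)+1+(d:ℕ)+pp) * ((q-1)⁻¹)^2)))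
      * ((F (((c:ℤ) + R) - M) * F (((c:ℤ) + R) + M + pp))
         * Polynomial.eval (zv M pp)
            (∏ d ∈ Finset.range R, (Polynomial.X - Polynomial.C (wv ((c:ℤ)+1+(d:ℕ)) pp)))) := by
  have hprod : (∏ d ∈ Finset.range R, qintZ ((c:ℤ) - M + 1 + d))
        * (∏ d ∈ Finset.range R, qintZ ((c:ℤ) + M + pp + 1 + d))
      = (∏ d ∈ Finset.range R, (-(q ^ ((c:ℤ)+1+(d:ℕ)+pp) * ((q-1)⁻¹)^2)))
        * ∏ d ∈ Finset.range R, (zv M pp - wv ((c:ℤ)+1+(d:ℕ)) pp) := by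
    rw [← Finset.prod_mul_distrib, ← Finset.prod_mul_distrib]
    refine Finset.prod_congr rfl fun d _ => ?_
    rw [show (c:ℤ) - M + 1 + d = ((c:ℤ)+1+d) - M by ring,
      show (c:ℤ) + M + pp + 1 + d = ((c:ℤ)+1+d) + M + pp by ring,
      pair_iden]
  rw [qbinomZ_eq, F_eq ((c:ℤ) - M) R, F_eq ((c:ℤ) + M + pp) R,
    show (c:ℤ) - M + R = (c:ℤ) + R - M by ring,
    show (c:ℤ) + M + pp + R = (c:ℤ) + R + M + pp by ring,
    Polynomial.eval_prod]
  simp only [Polynomial.eval_sub, Polynomial.eval_X, Polynomial.eval_C]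
  linear_combination (qfact (2*c+pp) * F ((c:ℤ) + R - M) * F ((c:ℤ) + R + M + pp)) * hprod

end Stmt4Aux

open Stmt4Aux Polynomial

/-- Type `D` multiplicity formula: for `p ∈ {0,1}` and a partition `λ` inside an
`n × k` rectangle (`l i = λ_{i+1}`), with `a_i = λ_i + n - i + p/2` (so that, writing
`b_i = λ_i + n - i`, one has `a_i - a_j = b_i - b_j`, `a_i + a_j = b_i + b_j + p`,
`k+n-1-a_i+p/2 = k - λ_i + i - 1` and `k+n-1+a_i+p/2 = k+n-1+b_i+p`):
`det[ qbinom(2(k+i)+p, k+i-j-λ_{n-j}) ]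
  = q^{‖λ̄‖} ∏_i [2k+2n-2i+p]! ∏_{i<j} [a_i-a_j][a_i+a_j]
      / ∏_i [k+n-1-a_i+p/2]! [k+n-1+a_i+p/2]!`. -/
theorem stmt4 (n k p : ℕ) (hp : p ≤ 1) (hn : 0 < n) (hk : 0 < k)
    (l : Fin n → ℕ)
    (hl : ∀ i j : Fin n, i ≤ j → l j ≤ l i) (hbd : ∀ i, l i ≤ k) :
    Matrix.det (Matrix.of fun i j : Fin n =>
        qbinomZ (2 * (k + (i : ℕ)) + p)
          ((k : ℤ) + (i : ℕ) - (j : ℕ) - (l j.rev : ℤ)))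
      = q ^ (∑ i : Fin n, (i : ℕ) * (k - l i.rev))
        * (∏ i : Fin n, qfact (2 * k + 2 * (n - 1 - (i : ℕ)) + p))
        * (∏ i : Fin n, ∏ j ∈ Finset.Ioi i,
            qint ((l i + (n - 1 - (i : ℕ))) - (l j + (n - 1 - (j : ℕ))))
              * qint ((l i + (n - 1 - (i : ℕ))) + (l j + (n - 1 - (j : ℕ))) + p))
        / (∏ i : Fin n,
            qfact (k - l i + (i : ℕ))
              * qfact (k + 2 * (n - 1) - (i : ℕ) + l i + p)) := by
  classical
  have hmono : ∀ i j : Fin n, i < j → (i:ℕ) + l i.rev < (j:ℕ) + l j.rev := by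
    intro i j hij
    have h1 : j.rev ≤ i.rev := by rw [Fin.rev_le_rev]; exact hij.le
    have h2 := hl j.rev i.rev h1
    have h3 : (i:ℕ) < (j:ℕ) := hij
    omega
  -- Step 1: rewrite the matrix entrywise
  have hmat : (Matrix.of fun i j : Fin n =>
        qbinomZ (2 * (k + (i : ℕ)) + p) ((k : ℤ) + (i : ℕ) - (j : ℕ) - (l j.rev : ℤ)))
      = Matrix.of (fun i j : Fin n =>
          (qfact (2*(k+(i:ℕ))+p)
            * ∏ d ∈ Finset.range (n - 1 - (i:ℕ)),
               (-(q ^ (((k+(i:ℕ) : ℕ) : ℤ)+1+(d:ℤ)+(p:ℤ)) * ((q-1)⁻¹)^2)))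
          * ((Matrix.of (fun i' j' : Fin n =>
              (F (((k+(n-1) : ℕ) : ℤ) - (((j':ℕ) + l j'.rev : ℕ) : ℤ))
                * F (((k+(n-1) : ℕ) : ℤ) + (((j':ℕ) + l j'.rev : ℕ) : ℤ) + (p:ℤ)))
              * ((Matrix.of (fun i'' j'' : Fin n =>
                  Polynomial.eval (zv ((j'':ℕ) + l j''.rev) p)
                    (∏ d ∈ Finset.range (n - 1 - (i'':ℕ)),
                      (Polynomial.X - Polynomial.C (wv (((k+(i'':ℕ) : ℕ) : ℤ)+1+(d:ℤ)) p)))))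
                i' j'))) i j)) := by
    ext i j
    simp only [Matrix.of_apply]
    have hi := i.isLt
    rw [show (k : ℤ) + (i:ℕ) - (j:ℕ) - (l j.rev : ℤ)
        = ((k+(i:ℕ) : ℕ) : ℤ) - (((j:ℕ) + l j.rev : ℕ) : ℤ) by push_cast; ring]
    rw [entry_lemma (k+(i:ℕ)) ((j:ℕ) + l j.rev) p (n - 1 - (i:ℕ))]
    rw [show ((k+(i:ℕ) : ℕ) : ℤ) + ((n - 1 - (i:ℕ) : ℕ) : ℤ) = ((k+(n-1) : ℕ) : ℤ) by omega]
  rw [hmat]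
  -- Step 2: pull out row and column factors, evaluate inner determinant
  have hsplit1 : Matrix.det (Matrix.of (fun i j : Fin n =>
          (qfact (2*(k+(i:ℕ))+p)
            * ∏ d ∈ Finset.range (n - 1 - (i:ℕ)),
               (-(q ^ (((k+(i:ℕ) : ℕ) : ℤ)+1+(d:ℤ)+(p:ℤ)) * ((q-1)⁻¹)^2)))
          * ((Matrix.of (fun i' j' : Fin n =>
              (F (((k+(n-1) : ℕ) : ℤ) - (((j':ℕ) + l j'.rev : ℕ) : ℤ))
                * F (((k+(n-1) : ℕ) : ℤ) + (((j':ℕ) + l j'.rev : ℕ) : ℤ) + (p:ℤ)))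
              * ((Matrix.of (fun i'' j'' : Fin n =>
                  Polynomial.eval (zv ((j'':ℕ) + l j''.rev) p)
                    (∏ d ∈ Finset.range (n - 1 - (i'':ℕ)),
                      (Polynomial.X - Polynomial.C (wv (((k+(i'':ℕ) : ℕ) : ℤ)+1+(d:ℤ)) p)))))
                i' j'))) i j)))
      = (∏ i : Fin n, (qfact (2*(k+(i:ℕ))+p)
            * ∏ d ∈ Finset.range (n - 1 - (i:ℕ)),
               (-(q ^ (((k+(i:ℕ) : ℕ) : ℤ)+1+(d:ℤ)+(p:ℤ)) * ((q-1)⁻¹)^2))))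
        * Matrix.det (Matrix.of (fun i' j' : Fin n =>
              (F (((k+(n-1) : ℕ) : ℤ) - (((j':ℕ) + l j'.rev : ℕ) : ℤ))
                * F (((k+(n-1) : ℕ) : ℤ) + (((j':ℕ) + l j'.rev : ℕ) : ℤ) + (p:ℤ)))
              * ((Matrix.of (fun i'' j'' : Fin n =>
                  Polynomial.eval (zv ((j'':ℕ) + l j''.rev) p)
                    (∏ d ∈ Finset.range (n - 1 - (i'':ℕ)),
                      (Polynomial.X - Polynomial.C (wv (((k+(i'':ℕ) : ℕ) : ℤ)+1+(d:ℤ)) p)))))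
                i' j'))) := Matrix.det_mul_column _ _
  have hsplit2 : Matrix.det (Matrix.of (fun i' j' : Fin n =>
              (F (((k+(n-1) : ℕ) : ℤ) - (((j':ℕ) + l j'.rev : ℕ) : ℤ))
                * F (((k+(n-1) : ℕ) : ℤ) + (((j':ℕ) + l j'.rev : ℕ) : ℤ) + (p:ℤ)))
              * ((Matrix.of (fun i'' j'' : Fin n =>
                  Polynomial.eval (zv ((j'':ℕ) + l j''.rev) p)
                    (∏ d ∈ Finset.range (n - 1 - (i'':ℕ)),
                      (Polynomial.X - Polynomial.C (wv (((k+(i'':ℕ) : ℕ) : ℤ)+1+(d:ℤ)) p)))))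
                i' j')))
      = (∏ j' : Fin n, (F (((k+(n-1) : ℕ) : ℤ) - (((j':ℕ) + l j'.rev : ℕ) : ℤ))
                * F (((k+(n-1) : ℕ) : ℤ) + (((j':ℕ) + l j'.rev : ℕ) : ℤ) + (p:ℤ))))
        * Matrix.det (Matrix.of (fun i'' j'' : Fin n =>
                  Polynomial.eval (zv ((j'':ℕ) + l j''.rev) p)
                    (∏ d ∈ Finset.range (n - 1 - (i'':ℕ)),
                      (Polynomial.X - Polynomial.C (wv (((k+(i'':ℕ) : ℕ) : ℤ)+1+(d:ℤ)) p))))) :=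
    Matrix.det_mul_row _ _
  have hdet3 : Matrix.det (Matrix.of (fun i'' j'' : Fin n =>
                  Polynomial.eval (zv ((j'':ℕ) + l j''.rev) p)
                    (∏ d ∈ Finset.range (n - 1 - (i'':ℕ)),
                      (Polynomial.X - Polynomial.C (wv (((k+(i'':ℕ) : ℕ) : ℤ)+1+(d:ℤ)) p)))))
      = ∏ i : Fin n, ∏ j ∈ Finset.Ioi i,
          (zv ((i:ℕ) + l i.rev) p - zv ((j:ℕ) + l j.rev) p) :=
    det_prod_linear (fun i'' d => wv (((k+(i'':ℕ) : ℕ) : ℤ)+1+(d:ℤ)) p)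
      (fun j'' => zv ((j'':ℕ) + l j''.rev) p)
  rw [hsplit1, hsplit2, hdet3]
  -- Step 3: rewrite row factor products over Ioi
  have hrowfac : ∀ i : Fin n,
      (∏ d ∈ Finset.range (n - 1 - (i:ℕ)),
          (-(q ^ (((k+(i:ℕ) : ℕ) : ℤ)+1+(d:ℤ)+(p:ℤ)) * ((q-1)⁻¹)^2)))
      = ∏ j ∈ Finset.Ioi i, (-(q ^ ((k:ℤ)+(p:ℤ)+((j:ℕ):ℤ)) * ((q-1)⁻¹)^2)) := by
    intro i
    refine Finset.prod_nbij' (fun d => if h : (i:ℕ)+1+d < n then (⟨(i:ℕ)+1+d, h⟩ : Fin n) else i)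
      (fun j => (j:ℕ) - (i:ℕ) - 1) ?_ ?_ ?_ ?_ ?_
    · intro d hd
      rw [Finset.mem_range] at hd
      have hi := i.isLt
      have h : (i:ℕ)+1+d < n := by omega
      rw [dif_pos h, Finset.mem_Ioi, Fin.lt_def]
      show (i:ℕ) < (i:ℕ)+1+d
      omega
    · intro j hj
      rw [Finset.mem_Ioi] at hj
      have hj' : (i:ℕ) < (j:ℕ) := hj
      have := j.isLt
      rw [Finset.mem_range]
      omega
    · intro d hd
      rw [Finset.mem_range] at hd
      have hi := i.isLt
      have h : (i:ℕ)+1+d < n := by omega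
      rw [dif_pos h]
      show (i:ℕ)+1+d - (i:ℕ) - 1 = d
      omega
    · intro j hj
      rw [Finset.mem_Ioi] at hj
      have hj' : (i:ℕ) < (j:ℕ) := hj
      have hjl := j.isLt
      have h : (i:ℕ)+1+((j:ℕ) - (i:ℕ) - 1) < n := by omega
      rw [dif_pos h]
      exact Fin.ext (show (i:ℕ)+1+((j:ℕ) - (i:ℕ) - 1) = (j:ℕ) by omega)
    · intro d hd
      rw [Finset.mem_range] at hd
      have hi := i.isLt
      have h : (i:ℕ)+1+d < n := by omega
      rw [dif_pos h]
      show -(q ^ (((k+(i:ℕ) : ℕ) : ℤ)+1+(d:ℤ)+(p:ℤ)) * ((q-1)⁻¹)^2)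
        = -(q ^ ((k:ℤ)+(p:ℤ)+(((i:ℕ)+1+d : ℕ):ℤ)) * ((q-1)⁻¹)^2)
      rw [show ((k:ℤ)+(p:ℤ)+(((i:ℕ)+1+d : ℕ):ℤ)) = ((k+(i:ℕ) : ℕ) : ℤ)+1+(d:ℤ)+(p:ℤ) by push_cast; ring]
  have hrowsplit : (∏ i : Fin n, (qfact (2*(k+(i:ℕ))+p)
        * ∏ d ∈ Finset.range (n - 1 - (i:ℕ)),
            (-(q ^ (((k+(i:ℕ) : ℕ) : ℤ)+1+(d:ℤ)+(p:ℤ)) * ((q-1)⁻¹)^2))))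
      = (∏ i : Fin n, qfact (2*(k+(i:ℕ))+p))
        * ∏ i : Fin n, ∏ j ∈ Finset.Ioi i, (-(q ^ ((k:ℤ)+(p:ℤ)+((j:ℕ):ℤ)) * ((q-1)⁻¹)^2)) := by
    rw [Finset.prod_mul_distrib]
    congr 1
    exact Finset.prod_congr rfl fun i _ => hrowfac i
  rw [hrowsplit]
  -- Step 4: merge the row sign factors with the Vandermonde product
  have hpoint : ∀ i j : Fin n, i < j →
      (-(q ^ ((k:ℤ)+(p:ℤ)+((j:ℕ):ℤ)) * ((q-1)⁻¹)^2))
        * (zv ((i:ℕ) + l i.rev) p - zv ((j:ℕ) + l j.rev) p)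
      = q ^ (k - l j.rev)
        * (qint (((j:ℕ) + l j.rev) - ((i:ℕ) + l i.rev))
            * qint (((i:ℕ) + l i.rev) + ((j:ℕ) + l j.rev) + p)) := by
    intro i j hij
    rw [z_diff ((i:ℕ) + l i.rev) ((j:ℕ) + l j.rev) p (hmono i j hij).le]
    have h1 : ((q-1)⁻¹)^2 * (q-1)^2 = 1 := by
      rw [← mul_pow, inv_mul_cancel₀ q_sub_one_ne_zero, one_pow]
    have h2 : q ^ ((k:ℤ)+(p:ℤ)+((j:ℕ):ℤ)) * q ^ (-((((j:ℕ) + l j.rev : ℕ)):ℤ) - (p:ℤ))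
        = q ^ (k - l j.rev) := by
      have hb := hbd j.rev
      rw [← zpow_add₀ q_ne_zero,
        show (k:ℤ)+(p:ℤ)+((j:ℕ):ℤ) + (-((((j:ℕ) + l j.rev : ℕ)):ℤ) - (p:ℤ))
          = ((k - l j.rev : ℕ) : ℤ) by omega, zpow_natCast]
    calc (-(q ^ ((k:ℤ)+(p:ℤ)+((j:ℕ):ℤ)) * ((q-1)⁻¹)^2))
          * (-((q - 1) ^ 2 * q ^ (-((((j:ℕ) + l j.rev : ℕ)):ℤ) - (p:ℤ))
              * (qint (((j:ℕ) + l j.rev) - ((i:ℕ) + l i.rev))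
                  * qint (((i:ℕ) + l i.rev) + ((j:ℕ) + l j.rev) + p))))
        = (q ^ ((k:ℤ)+(p:ℤ)+((j:ℕ):ℤ)) * q ^ (-((((j:ℕ) + l j.rev : ℕ)):ℤ) - (p:ℤ)))
            * (((q-1)⁻¹)^2 * (q-1)^2)
            * (qint (((j:ℕ) + l j.rev) - ((i:ℕ) + l i.rev))
                * qint (((i:ℕ) + l i.rev) + ((j:ℕ) + l j.rev) + p)) := by ring
      _ = _ := by rw [h1, h2, mul_one]
  have hE : (∑ i : Fin n, ∑ j ∈ Finset.Ioi i, (k - l j.rev))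
      = ∑ i : Fin n, (i:ℕ) * (k - l i.rev) := by
    have h := sum_sum_Ioi (n := n) (M := ℕ) (fun _ j => k - l j.rev)
    rw [h]
    refine Finset.sum_congr rfl fun j _ => ?_
    rw [Finset.sum_const, Fin.card_Iio, smul_eq_mul]
  have hmerge : (∏ i : Fin n, ∏ j ∈ Finset.Ioi i, (-(q ^ ((k:ℤ)+(p:ℤ)+((j:ℕ):ℤ)) * ((q-1)⁻¹)^2)))
        * (∏ i : Fin n, ∏ j ∈ Finset.Ioi i, (zv ((i:ℕ) + l i.rev) p - zv ((j:ℕ) + l j.rev) p))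
      = q ^ (∑ i : Fin n, (i:ℕ) * (k - l i.rev))
        * ∏ i : Fin n, ∏ j ∈ Finset.Ioi i,
            (qint (((j:ℕ) + l j.rev) - ((i:ℕ) + l i.rev))
              * qint (((i:ℕ) + l i.rev) + ((j:ℕ) + l j.rev) + p)) := by
    rw [← Finset.prod_mul_distrib]
    calc (∏ i : Fin n, ((∏ j ∈ Finset.Ioi i, (-(q ^ ((k:ℤ)+(p:ℤ)+((j:ℕ):ℤ)) * ((q-1)⁻¹)^2)))
            * ∏ j ∈ Finset.Ioi i, (zv ((i:ℕ) + l i.rev) p - zv ((j:ℕ) + l j.rev) p)))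
        = ∏ i : Fin n, ∏ j ∈ Finset.Ioi i,
            ((-(q ^ ((k:ℤ)+(p:ℤ)+((j:ℕ):ℤ)) * ((q-1)⁻¹)^2))
              * (zv ((i:ℕ) + l i.rev) p - zv ((j:ℕ) + l j.rev) p)) := by
          exact Finset.prod_congr rfl fun i _ => (Finset.prod_mul_distrib).symm
      _ = ∏ i : Fin n, ∏ j ∈ Finset.Ioi i,
            (q ^ (k - l j.rev)
              * (qint (((j:ℕ) + l j.rev) - ((i:ℕ) + l i.rev))
                  * qint (((i:ℕ) + l i.rev) + ((j:ℕ) + l j.rev) + p))) := by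
          refine Finset.prod_congr rfl fun i _ => Finset.prod_congr rfl fun j hj => ?_
          exact hpoint i j (Finset.mem_Ioi.mp hj)
      _ = (∏ i : Fin n, ∏ j ∈ Finset.Ioi i, q ^ (k - l j.rev))
          * ∏ i : Fin n, ∏ j ∈ Finset.Ioi i,
              (qint (((j:ℕ) + l j.rev) - ((i:ℕ) + l i.rev))
                * qint (((i:ℕ) + l i.rev) + ((j:ℕ) + l j.rev) + p)) := by
          rw [← Finset.prod_mul_distrib]
          exact Finset.prod_congr rfl fun i _ => Finset.prod_mul_distrib
      _ = q ^ (∑ i : Fin n, (i:ℕ) * (k - l i.rev))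
          * ∏ i : Fin n, ∏ j ∈ Finset.Ioi i,
              (qint (((j:ℕ) + l j.rev) - ((i:ℕ) + l i.rev))
                * qint (((i:ℕ) + l i.rev) + ((j:ℕ) + l j.rev) + p)) := by
          congr 1
          rw [← hE]
          rw [Finset.prod_congr rfl fun i (_ : i ∈ Finset.univ) =>
            Finset.prod_pow_eq_pow_sum (Finset.Ioi i) (fun j => k - l j.rev) q]
          exact Finset.prod_pow_eq_pow_sum Finset.univ _ q
  -- Step 5: identify with the right-hand side
  have hqf : (∏ i : Fin n, qfact (2 * k + 2 * (n - 1 - (i : ℕ)) + p))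
      = ∏ i : Fin n, qfact (2*(k+(i:ℕ))+p) := by
    rw [← Equiv.prod_comp Fin.revPerm (fun i : Fin n => qfact (2*(k+(i:ℕ))+p))]
    refine Finset.prod_congr rfl fun i _ => ?_
    have := i.isLt
    congr 1
    simp only [Fin.revPerm_apply, Fin.val_rev]
    omega
  have hpairRHS : (∏ i : Fin n, ∏ j ∈ Finset.Ioi i,
        qint ((l i + (n - 1 - (i : ℕ))) - (l j + (n - 1 - (j : ℕ))))
          * qint ((l i + (n - 1 - (i : ℕ))) + (l j + (n - 1 - (j : ℕ))) + p))
      = ∏ i : Fin n, ∏ j ∈ Finset.Ioi i,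
          (qint (((j:ℕ) + l j.rev) - ((i:ℕ) + l i.rev))
            * qint (((i:ℕ) + l i.rev) + ((j:ℕ) + l j.rev) + p)) := by
    have h5 : (∏ i : Fin n, ∏ j ∈ Finset.Ioi i,
        qint ((l j.rev + (n - 1 - ((j.rev : Fin n) : ℕ))) - (l i.rev + (n - 1 - ((i.rev : Fin n) : ℕ))))
          * qint ((l j.rev + (n - 1 - ((j.rev : Fin n) : ℕ))) + (l i.rev + (n - 1 - ((i.rev : Fin n) : ℕ))) + p))
        = ∏ i : Fin n, ∏ j ∈ Finset.Ioi i,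
        qint ((l i + (n - 1 - (i : ℕ))) - (l j + (n - 1 - (j : ℕ))))
          * qint ((l i + (n - 1 - (i : ℕ))) + (l j + (n - 1 - (j : ℕ))) + p) :=
      prod_Ioi_rev (fun a b => qint ((l a + (n - 1 - (a : ℕ))) - (l b + (n - 1 - (b : ℕ))))
          * qint ((l a + (n - 1 - (a : ℕ))) + (l b + (n - 1 - (b : ℕ))) + p))
    rw [← h5]
    refine Finset.prod_congr rfl fun i _ => Finset.prod_congr rfl fun j hj => ?_
    have hi := i.isLt
    have hj' := j.isLt
    rw [Fin.val_rev, Fin.val_rev]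
    congr 2
    · omega
    · omega
  have hden : (∏ i : Fin n,
        qfact (k - l i + (i : ℕ)) * qfact (k + 2 * (n - 1) - (i : ℕ) + l i + p))
      = ∏ j : Fin n, qfact (k + (n-1) - ((j:ℕ) + l j.rev))
          * qfact (k + (n-1) + ((j:ℕ) + l j.rev) + p) := by
    rw [← Equiv.prod_comp Fin.revPerm
      (fun i : Fin n => qfact (k - l i + (i : ℕ)) * qfact (k + 2 * (n - 1) - (i : ℕ) + l i + p))]
    refine Finset.prod_congr rfl fun j _ => ?_
    have hj := j.isLt
    have hb := hbd j.rev
    simp only [Fin.revPerm_apply]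
    rw [show k - l j.rev + ((j.rev : Fin n):ℕ) = k + (n-1) - ((j:ℕ) + l j.rev) from by
        rw [Fin.val_rev]; omega,
      show k + 2*(n-1) - ((j.rev : Fin n):ℕ) + l j.rev + p = k + (n-1) + ((j:ℕ) + l j.rev) + p from by
        rw [Fin.val_rev]; omega]
  have hcolprod : (∏ j' : Fin n, (F (((k+(n-1) : ℕ) : ℤ) - (((j':ℕ) + l j'.rev : ℕ) : ℤ))
        * F (((k+(n-1) : ℕ) : ℤ) + (((j':ℕ) + l j'.rev : ℕ) : ℤ) + (p:ℤ))))
      = ∏ j : Fin n, (qfact (k + (n-1) - ((j:ℕ) + l j.rev)))⁻¹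
          * (qfact (k + (n-1) + ((j:ℕ) + l j.rev) + p))⁻¹ := by
    refine Finset.prod_congr rfl fun j _ => ?_
    have hj := j.isLt
    have hb := hbd j.rev
    rw [show ((k+(n-1) : ℕ) : ℤ) - (((j:ℕ) + l j.rev : ℕ) : ℤ)
        = ((k + (n-1) - ((j:ℕ) + l j.rev) : ℕ) : ℤ) by omega,
      show ((k+(n-1) : ℕ) : ℤ) + (((j:ℕ) + l j.rev : ℕ) : ℤ) + (p:ℤ)
        = ((k + (n-1) + ((j:ℕ) + l j.rev) + p : ℕ) : ℤ) by push_cast; ring,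
      F_natCast, F_natCast]
  have hdeninv : (∏ j : Fin n, qfact (k + (n-1) - ((j:ℕ) + l j.rev))
          * qfact (k + (n-1) + ((j:ℕ) + l j.rev) + p))⁻¹
      = ∏ j : Fin n, (qfact (k + (n-1) - ((j:ℕ) + l j.rev)))⁻¹
          * (qfact (k + (n-1) + ((j:ℕ) + l j.rev) + p))⁻¹ := by
    rw [← Finset.prod_inv_distrib]
    exact Finset.prod_congr rfl fun j _ => mul_inv _ _
  rw [div_eq_mul_inv, hqf, hpairRHS, hden, hdeninv, ← hcolprod]
  calc (∏ i : Fin n, qfact (2*(k+(i:ℕ))+p))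
        * (∏ i : Fin n, ∏ j ∈ Finset.Ioi i, (-(q ^ ((k:ℤ)+(p:ℤ)+((j:ℕ):ℤ)) * ((q-1)⁻¹)^2)))
        * ((∏ j' : Fin n, (F (((k+(n-1) : ℕ) : ℤ) - (((j':ℕ) + l j'.rev : ℕ) : ℤ))
            * F (((k+(n-1) : ℕ) : ℤ) + (((j':ℕ) + l j'.rev : ℕ) : ℤ) + (p:ℤ))))
          * ∏ i : Fin n, ∏ j ∈ Finset.Ioi i,
              (zv ((i:ℕ) + l i.rev) p - zv ((j:ℕ) + l j.rev) p))
      = (∏ i : Fin n, qfact (2*(k+(i:ℕ))+p))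
        * ((∏ i : Fin n, ∏ j ∈ Finset.Ioi i, (-(q ^ ((k:ℤ)+(p:ℤ)+((j:ℕ):ℤ)) * ((q-1)⁻¹)^2)))
          * (∏ i : Fin n, ∏ j ∈ Finset.Ioi i,
              (zv ((i:ℕ) + l i.rev) p - zv ((j:ℕ) + l j.rev) p)))
        * (∏ j' : Fin n, (F (((k+(n-1) : ℕ) : ℤ) - (((j':ℕ) + l j'.rev : ℕ) : ℤ))
            * F (((k+(n-1) : ℕ) : ℤ) + (((j':ℕ) + l j'.rev : ℕ) : ℤ) + (p:ℤ)))) := by ring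
    _ = _ := by
      rw [hmerge]
      ring

end
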